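/- arXiv:2311.05277 — 2 statements merged into one kernel-verified Lean document; each statement's English description precedes it below -/
import Mathlib

section
/- Let n ≥ 2, M > 0, c > 0 be real numbers and consider the polynomial p(x) = xⁿ + (1/(n−2)!)·x² − (1/(n!·M))·x + (c·τ₀)/(n!·M) for x ≥ 0. There exists α ∈ (0,1) such that if τ₀ = (1/2)·(1−α)²/(4·n·(n−1)·c·M), then there exists an x > 0 with p(x) < 0; in fact p(x) < 0 for all x with (1−α)·√(1/2)/(2n(n−1)M) < x < (α/(n!·M))^{1/(n−1)}. -/
set_option maxHeartbeats 1000000 in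
/-- There exists `α ∈ (0,1)` such that, with `τ₀ = (1/2)(1−α)²/(4n(n−1)cM)`, the polynomial
`p(x) = xⁿ + x²/(n−2)! − x/(n!M) + cτ₀/(n!M)` is negative at some positive point; in fact it is
negative on the whole interval `((1−α)√(1/2)/(2n(n−1)M), (α/(n!M))^{1/(n−1)})`. -/
theorem stmt6 (n : ℕ) (hn : 2 ≤ n) (M c : ℝ) (hM : 0 < M) (hc : 0 < c) :
    ∃ α ∈ Set.Ioo (0:ℝ) 1,
      ∀ τ₀ : ℝ,
        τ₀ = (1 / 2) * (1 - α) ^ 2 / (4 * (n : ℝ) * ((n : ℝ) - 1) * c * M) →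
        ((∃ x : ℝ, 0 < x ∧
            x ^ n + (1 / ((n - 2).factorial : ℝ)) * x ^ 2
              - (1 / ((n.factorial : ℝ) * M)) * x + c * τ₀ / ((n.factorial : ℝ) * M) < 0) ∧
          ∀ x : ℝ,
            (1 - α) * Real.sqrt (1 / 2) / (2 * (n : ℝ) * ((n : ℝ) - 1) * M) < x →
            x < (α / ((n.factorial : ℝ) * M)) ^ ((1 : ℝ) / ((n : ℝ) - 1)) →
            x ^ n + (1 / ((n - 2).factorial : ℝ)) * x ^ 2
              - (1 / ((n.factorial : ℝ) * M)) * x + c * τ₀ / ((n.factorial : ℝ) * M) < 0) := by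
  have hn2 : (2:ℝ) ≤ (n:ℝ) := by exact_mod_cast hn
  have hnm1 : (0:ℝ) < (n:ℝ) - 1 := by linarith
  set F : ℝ := (n.factorial : ℝ) * M with hFdef
  have hDpos : (0:ℝ) < ((n-2).factorial : ℝ) := by
    exact_mod_cast Nat.factorial_pos (n-2)
  have hFpos : 0 < F := by
    have : (0:ℝ) < (n.factorial : ℝ) := by exact_mod_cast Nat.factorial_pos n
    exact mul_pos this hM
  set A : ℝ := (n:ℝ) * ((n:ℝ) - 1) * M with hAdef
  have hA : 0 < A := by
    have : (0:ℝ) < (n:ℝ) := by linarith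
    exact mul_pos (mul_pos this hnm1) hM
  -- factorial identity
  have hfac : (n.factorial : ℝ) = (n:ℝ) * ((n:ℝ) - 1) * ((n-2).factorial : ℝ) := by
    obtain ⟨m, rfl⟩ : ∃ m, n = m + 2 := ⟨n - 2, by omega⟩
    simp [Nat.factorial_succ]
    push_cast
    ring
  have hFAD : F = A * ((n-2).factorial : ℝ) := by
    rw [hFdef, hfac, hAdef]; ring
  set e : ℝ := (1:ℝ) / ((n:ℝ) - 1) with hedef
  have he : 0 < e := by positivity
  -- choose α by IVT
  have hg : ∃ α ∈ Set.Ioo (0:ℝ) 1, (α/F) ^ e - (1-α)/(2*A) = 0 := by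
    have hcont : ContinuousOn (fun a : ℝ => (a/F) ^ e - (1-a)/(2*A)) (Set.Icc 0 1) := by
      apply Continuous.continuousOn
      have h1 : Continuous fun y : ℝ => y ^ e :=
        continuous_iff_continuousAt.2 fun y => Real.continuousAt_rpow_const y e (Or.inr he.le)
      have h2 : Continuous fun a : ℝ => (a/F) ^ e := h1.comp (continuous_id.div_const F)
      exact h2.sub ((continuous_const.sub continuous_id).div_const (2*A))
    have hsub := intermediate_value_Ioo (zero_le_one) hcont
    have h0 : ((0:ℝ)/F) ^ e - (1-0)/(2*A) < 0 := by
      rw [zero_div, Real.zero_rpow he.ne']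
      simp
      positivity
    have h1 : (0:ℝ) < ((1:ℝ)/F) ^ e - (1-1)/(2*A) := by
      simp
      exact Real.rpow_pos_of_pos (by positivity) e
    have hmem : (0:ℝ) ∈ Set.Ioo (((0:ℝ)/F) ^ e - (1-0)/(2*A)) (((1:ℝ)/F) ^ e - (1-1)/(2*A)) :=
      ⟨h0, h1⟩
    obtain ⟨α, hαmem, hα0⟩ := hsub hmem
    exact ⟨α, hαmem, hα0⟩
  obtain ⟨α, hαIoo, hgα⟩ := hg
  have hb : 0 < 1 - α := by linarith [hαIoo.2]
  have hα0 : 0 < α := hαIoo.1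
  refine ⟨α, hαIoo, ?_⟩
  intro τ₀ hτ₀
  have key : (α/F) ^ e = (1-α)/(2*A) := by linarith
  set s : ℝ := Real.sqrt (1/2) with hsdef
  have hs2 : s ^ 2 = 1/2 := Real.sq_sqrt (by norm_num)
  have hs0 : 0 < s := Real.sqrt_pos.2 (by norm_num)
  have hs1 : s < 1 := by nlinarith
  have hshalf : 1/2 < s := by nlinarith
  have hct : 8 * A * (c * τ₀) = (1-α)^2 := by
    rw [hτ₀, hAdef]
    field_simp
    ring
  -- the universal statement
  have hall : ∀ x : ℝ,
      (1 - α) * s / (2 * (n : ℝ) * ((n : ℝ) - 1) * M) < x →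
      x < (α / F) ^ e →
      x ^ n + (1 / ((n - 2).factorial : ℝ)) * x ^ 2
        - (1 / F) * x + c * τ₀ / F < 0 := by
    intro x hxL hxR
    have hden : 0 < 2 * (n : ℝ) * ((n : ℝ) - 1) * M := by positivity
    have hL0 : 0 < (1 - α) * s / (2 * (n : ℝ) * ((n : ℝ) - 1) * M) :=
      div_pos (mul_pos hb hs0) hden
    have hx0 : 0 < x := lt_trans hL0 hxL
    -- x^(n-1) < α/F
    have hαF : 0 < α / F := div_pos hα0 hFpos
    have hRn : ((α/F) ^ e) ^ (n-1) = α/F := by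
      rw [← Real.rpow_natCast ((α/F) ^ e) (n-1), ← Real.rpow_mul hαF.le]
      have hcast : ((n-1 : ℕ) : ℝ) = (n:ℝ) - 1 := by
        push_cast [Nat.cast_sub (by omega : 1 ≤ n)]
        ring
      rw [hcast, hedef]
      rw [one_div, inv_mul_cancel₀ hnm1.ne', Real.rpow_one]
    have hxn1 : x ^ (n-1) < α / F := by
      calc x ^ (n-1) < ((α/F) ^ e) ^ (n-1) :=
            pow_lt_pow_left₀ hxR hx0.le (by omega)
        _ = α/F := hRn
    have hxn : x ^ n < (α/F) * x := by
      have hxx : x ^ n = x ^ (n-1) * x := by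
        rw [← pow_succ]
        congr 1
        omega
      rw [hxx]
      exact mul_lt_mul_of_pos_right hxn1 hx0
    -- quadratic bounds
    have hxR' : 2 * A * x < 1 - α := by
      rw [key] at hxR
      have := (lt_div_iff₀ (by positivity : (0:ℝ) < 2*A)).1 hxR
      linarith
    have hxL' : (1-α) * (1-s) < 2 * A * x := by
      have h1 : (1-α) * s / (2*A) < x := by
        have : (1 - α) * s / (2 * (n : ℝ) * ((n : ℝ) - 1) * M) = (1-α)*s/(2*A) := by
          rw [hAdef]; ring
        linarith [this ▸ hxL]
      have h2 : (1-α) * s < 2*A*x := by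
        have := (div_lt_iff₀ (by positivity : (0:ℝ) < 2*A)).1 h1
        linarith
      have h3 : (1-α) * (1-s) < (1-α) * s :=
        mul_lt_mul_of_pos_left (by linarith : 1-s < s) hb
      linarith
    -- numerator negative
    have hnum : A * x^2 - (1-α) * x + c * τ₀ < 0 := by
      have hp1 : 0 < 2*A*x - (1-α)*(1-s) := by linarith
      have hp2 : 0 < (1-α)*(1+s) - 2*A*x := by
        have h4 : 0 < (1-α) * s := mul_pos hb hs0
        have h5 : (1-α)*(1+s) = (1-α) + (1-α)*s := by ring
        linarith
      have h8 : 8 * A * (A * x^2 - (1-α) * x + c * τ₀) < 0 := by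
        nlinarith [mul_pos hp1 hp2, hs2, hct]
      by_contra h
      push_neg at h
      have : 0 ≤ 8 * A * (A * x^2 - (1-α) * x + c * τ₀) :=
        mul_nonneg (by positivity) h
      linarith
    -- assemble
    have hexpr : (α/F) * x + (1 / ((n - 2).factorial : ℝ)) * x ^ 2
        - (1 / F) * x + c * τ₀ / F = (A * x^2 - (1-α) * x + c * τ₀) / F := by
      rw [hFAD]
      field_simp
      ring
    have hdivneg : (A * x^2 - (1-α) * x + c * τ₀) / F < 0 :=
      div_neg_of_neg_of_pos hnum hFpos
    linarith [hxn, hexpr ▸ hdivneg]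
  refine ⟨?_, hall⟩
  -- witness
  set L : ℝ := (1 - α) * s / (2 * (n : ℝ) * ((n : ℝ) - 1) * M) with hLdef
  have hden : 0 < 2 * (n : ℝ) * ((n : ℝ) - 1) * M := by positivity
  have hL0 : 0 < L := div_pos (mul_pos hb hs0) hden
  have hLR : L < (α/F) ^ e := by
    rw [key]
    have hLA : L = (1-α)*s/(2*A) := by rw [hLdef, hAdef]; ring
    rw [hLA, div_lt_div_iff₀ (by positivity) (by positivity)]
    nlinarith [mul_pos (mul_pos hb hA) (show (0:ℝ) < 1 - s by linarith)]
  refine ⟨(L + (α/F) ^ e)/2, ?_, ?_⟩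
  · linarith
  · exact hall _ (by linarith) (by linarith)
end

section
/- Let n ≥ 2, M > 0, and let x ∈ ℝⁿ with ‖x‖ ≥ 5M, d > 0 with d ≥ 3M, and suppose the balls B_{2M}(0) and B_{d/2}(x) are disjoint. Define A₂ = {ζ ∈ B_{2‖x‖}(0) \ B_{2M}(0) : ‖ζ‖ ≤ ‖ζ−x‖}. Then ∫_{A₂} dm(ζ)/(‖ζ‖ⁿ·‖ζ−x‖ⁿ) ≤ C(n)·(1/‖x‖ⁿ)·ln(‖x‖/M) for a constant C(n) depending only on n. -/
/-!
On the region, `‖ζ‖ ≤ ‖ζ - x‖` and the triangle inequality give `‖ζ - x‖ ≥ ‖x‖ / 2`, so the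
integrand is at most `(2 / ‖x‖)ⁿ ‖ζ‖⁻ⁿ`, and the region lies in the annulus
`2M ≤ ‖ζ‖ < 2‖x‖`. In polar coordinates `‖ζ‖⁻ⁿ` integrates over that annulus to
`n · vol(B₁) · ∫ r⁻¹ dr = n · vol(B₁) · log (‖x‖ / M)`.
-/

open MeasureTheory Metric Set Module

theorem norm_le_two_mul_norm_sub_of_norm_le_norm_sub {E : Type*} [SeminormedAddCommGroup E]
    {x ζ : E} (h : ‖ζ‖ ≤ ‖ζ - x‖) : ‖x‖ ≤ 2 * ‖ζ - x‖ := by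
  have := norm_sub_le ζ (ζ - x)
  rw [sub_sub_cancel] at this
  linarith

section Annulus

variable {E : Type*} [NormedAddCommGroup E] [NormedSpace ℝ E] [FiniteDimensional ℝ E]
  [MeasurableSpace E] [BorelSpace E] (μ : Measure E) [μ.IsAddHaarMeasure]

theorem integrableOn_inv_norm_pow_annulus (k : ℕ) {a b : ℝ} (ha : 0 < a) :
    IntegrableOn (fun z : E => (‖z‖ ^ k)⁻¹) {z | ‖z‖ ∈ Ico a b} μ := by
  have hsub : {z : E | ‖z‖ ∈ Ico a b} ⊆ closedBall 0 b := fun z hz => by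
    simpa using hz.2.le
  have hfin : μ {z : E | ‖z‖ ∈ Ico a b} ≠ ⊤ :=
    ne_top_of_le_ne_top measure_closedBall_lt_top.ne (measure_mono hsub)
  refine Measure.integrableOn_of_bounded hfin (by fun_prop) (M := (a ^ k)⁻¹) ?_
  refine ae_restrict_of_forall_mem (measurableSet_Ico.preimage measurable_norm) fun z hz => ?_
  have hz : a ≤ ‖z‖ := (mem_Ico.1 hz).1
  rw [Real.norm_of_nonneg (by positivity)]
  gcongr

theorem integral_Ioi_pow_smul_indicator_inv_pow {n : ℕ} (hn : 0 < n) {a b : ℝ} (ha : 0 < a)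
    (hab : a ≤ b) :
    ∫ y in Ioi (0 : ℝ), y ^ (n - 1) • (Ico a b).indicator (fun r => (r ^ n)⁻¹) y =
      Real.log (b / a) := by
  have hIco : Ico a b ⊆ Ioi 0 := fun y hy => ha.trans_le hy.1
  simp_rw [← indicator_smul_apply (Ico a b) (fun y : ℝ => y ^ (n - 1)),
    setIntegral_indicator measurableSet_Ico, inter_eq_self_of_subset_right hIco,
    setIntegral_congr_set Ico_ae_eq_Ioc, ← intervalIntegral.integral_of_le hab]
  rw [← integral_inv_of_pos ha (ha.trans_le hab)]
  refine intervalIntegral.integral_congr fun y hy => ?_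
  have hy : 0 < y := ha.trans_le (by simpa [hab] using hy.1)
  rw [smul_eq_mul, ← pow_sub_one_mul hn.ne', mul_inv, mul_inv_cancel_left₀ (by positivity)]

theorem setIntegral_inv_norm_pow_finrank_annulus [Nontrivial E] {a b : ℝ} (ha : 0 < a)
    (hab : a ≤ b) :
    ∫ z in {z : E | ‖z‖ ∈ Ico a b}, (‖z‖ ^ finrank ℝ E)⁻¹ ∂μ =
      finrank ℝ E * μ.real (ball 0 1) * Real.log (b / a) := by
  rw [← integral_indicator (s := {z : E | ‖z‖ ∈ Ico a b})
    (measurableSet_Ico.preimage measurable_norm)]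
  change ∫ z, (Ico a b).indicator (fun r => (r ^ finrank ℝ E)⁻¹) ‖z‖ ∂μ = _
  rw [integral_fun_norm_addHaar, integral_Ioi_pow_smul_indicator_inv_pow finrank_pos ha hab,
    nsmul_eq_mul, smul_eq_mul, mul_assoc]

theorem setIntegral_inv_norm_pow_mul_norm_sub_pow_le [Nontrivial E] {M : ℝ} (hM : 0 < M) {x : E}
    (hx : M ≤ ‖x‖) :
    (∫ ζ in {ζ : E | ζ ∈ ball 0 (2 * ‖x‖) ∧ ζ ∉ ball 0 (2 * M) ∧ ‖ζ‖ ≤ ‖ζ - x‖},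
        1 / (‖ζ‖ ^ finrank ℝ E * ‖ζ - x‖ ^ finrank ℝ E) ∂μ) ≤
      2 ^ finrank ℝ E * (finrank ℝ E * μ.real (ball 0 1)) * (1 / ‖x‖ ^ finrank ℝ E) *
        Real.log (‖x‖ / M) := by
  set n := finrank ℝ E
  set A := {ζ : E | ζ ∈ ball 0 (2 * ‖x‖) ∧ ζ ∉ ball 0 (2 * M) ∧ ‖ζ‖ ≤ ‖ζ - x‖}
  set S := {ζ : E | ‖ζ‖ ∈ Ico (2 * M) (2 * ‖x‖)}
  have hxpos : 0 < ‖x‖ := hM.trans_le hx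
  have hAS : A ⊆ S := fun ζ ⟨hlt, hge, _⟩ =>
    ⟨by simpa using hge, by simpa using hlt⟩
  have hA : MeasurableSet A :=
    measurableSet_ball.inter (measurableSet_ball.compl.inter
      (measurableSet_le measurable_norm (by fun_prop)))
  have hS : IntegrableOn (fun ζ : E => (‖ζ‖ ^ n)⁻¹) S μ :=
    integrableOn_inv_norm_pow_annulus μ n (by positivity)
  have hbound : ∀ ζ ∈ A, 1 / (‖ζ‖ ^ n * ‖ζ - x‖ ^ n) ≤ 2 ^ n / ‖x‖ ^ n * (‖ζ‖ ^ n)⁻¹ := by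
    rintro ζ hζ
    have hζpos : 0 < ‖ζ‖ := by linarith [(hAS hζ).1]
    have hx2 := norm_le_two_mul_norm_sub_of_norm_le_norm_sub hζ.2.2
    calc 1 / (‖ζ‖ ^ n * ‖ζ - x‖ ^ n) ≤ 1 / (‖ζ‖ ^ n * (‖x‖ / 2) ^ n) := by
          gcongr; linarith
      _ = 2 ^ n / ‖x‖ ^ n * (‖ζ‖ ^ n)⁻¹ := by rw [div_pow]; field_simp
  calc (∫ ζ in A, 1 / (‖ζ‖ ^ n * ‖ζ - x‖ ^ n) ∂μ)
      ≤ ∫ ζ in A, 2 ^ n / ‖x‖ ^ n * (‖ζ‖ ^ n)⁻¹ ∂μ :=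
        integral_mono_of_nonneg (.of_forall fun _ => by positivity)
          ((hS.mono_set hAS).const_mul _) ((ae_restrict_iff' hA).2 (.of_forall hbound))
    _ ≤ ∫ ζ in S, 2 ^ n / ‖x‖ ^ n * (‖ζ‖ ^ n)⁻¹ ∂μ :=
        setIntegral_mono_set (hS.const_mul _) (.of_forall fun _ => by positivity)
          hAS.eventuallyLE
    _ = 2 ^ n / ‖x‖ ^ n * (n * μ.real (ball 0 1) * Real.log (2 * ‖x‖ / (2 * M))) := by
        rw [integral_const_mul, setIntegral_inv_norm_pow_finrank_annulus μ (by positivity)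
          (by linarith)]
    _ = _ := by rw [mul_div_mul_left _ _ two_ne_zero]; ring

end Annulus

/-- For `‖x‖ ≥ 5M`, `d ≥ 3M` and `A₂ = {ζ ∈ B_{2‖x‖}(0) \ B_{2M}(0) : ‖ζ‖ ≤ ‖ζ−x‖}`,
`∫_{A₂} dm(ζ)/(‖ζ‖ⁿ‖ζ−x‖ⁿ) ≤ C(n)·(1/‖x‖ⁿ)·ln(‖x‖/M)`. -/
theorem stmt19 (n : ℕ) (hn : 2 ≤ n) :
    ∃ C : ℝ, 0 < C ∧ ∀ M : ℝ, 0 < M → ∀ x : EuclideanSpace ℝ (Fin n), 5 * M ≤ ‖x‖ →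
      ∀ d : ℝ, 0 < d → 3 * M ≤ d →
      Disjoint (Metric.ball (0 : EuclideanSpace ℝ (Fin n)) (2 * M))
        (Metric.ball x (d / 2)) →
      (∫ ζ in {ζ : EuclideanSpace ℝ (Fin n) |
          ζ ∈ Metric.ball (0 : EuclideanSpace ℝ (Fin n)) (2 * ‖x‖) ∧
          ζ ∉ Metric.ball (0 : EuclideanSpace ℝ (Fin n)) (2 * M) ∧
          ‖ζ‖ ≤ ‖ζ - x‖},
          1 / (‖ζ‖ ^ n * ‖ζ - x‖ ^ n))
        ≤ C * (1 / ‖x‖ ^ n) * Real.log (‖x‖ / M) := by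
  have : Nontrivial (EuclideanSpace ℝ (Fin n)) :=
    nontrivial_of_finrank_pos (R := ℝ) (by rw [finrank_euclideanSpace_fin]; omega)
  refine ⟨2 ^ n * (n * volume.real (ball (0 : EuclideanSpace ℝ (Fin n)) 1)), ?_, ?_⟩
  · have : 0 < volume.real (ball (0 : EuclideanSpace ℝ (Fin n)) 1) :=
      ENNReal.toReal_pos (measure_ball_pos _ _ one_pos).ne' measure_ball_lt_top.ne
    positivity
  intro M hM x hx _ _ _ _
  simpa using setIntegral_inv_norm_pow_mul_norm_sub_pow_le volume hM (by linarith : M ≤ ‖x‖)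
end
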